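/- arXiv:2503.18259 — 2 statements merged into one kernel-verified Lean document; each statement's English description precedes it below -/
import Mathlib

section
/- Fix α ∈ (0,1), γ > 0 and z > 0. Then lim_{τ→∞} ∫_0^∞ e^{−zt} ζ^τ(t) dt = γ/(γ + z^α), where the limit is taken along positive integers τ large enough that γτ^{−α} < 1. (Pointwise convergence of the Laplace transforms of the rescaled renewal kernels to that of the Mittag-Leffler density; this is the analytic core of Lemma 2.1.) -/
/-!
Laplace transforms turn the renewal structure into generating functions. With `s = z/τ`,
`x = e^{-s}` and `Φ(x) = Σ φₙ xⁿ`, one has `Σ ψₙ xⁿ = aΦ/(1 - aΦ)`, and integrating the step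
function piece by piece gives
`∫₀^∞ e^{-zt} ζ^τ(t) dt = γ E Φ / (z^α R + γ Φ)` with `E = (1 - x)/s` and `R = (1 - Φ(x))/s^α`.
As `s → 0`, `E → 1`; the heart of the matter is `R → 1` (which also gives `Φ → 1`). The kernel
telescopes with tails `n^{-α}/Γ(1-α)`, so `1 - Φ(x) = (1 - x)(1 + Li_α(x)/Γ(1-α))`, and comparing
`Li_α(e^{-s}) = Σ n^{-α}e^{-sn}` with `∫₀^∞ t^{-α}e^{-st} dt = Γ(1-α) s^{α-1}` gives
`s^{1-α} Li_α(e^{-s}) → Γ(1-α)`.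
-/

open MeasureTheory Filter Set Topology

/-- The base kernel `(φ_n)_{n ≥ 1}` (with `φ_0 := 0`). -/
noncomputable def baseKernel (α : ℝ) (n : ℕ) : ℝ :=
  if n = 0 then 0
  else if n = 1 then 1 - 1 / Real.Gamma (1 - α)
  else (1 / Real.Gamma (1 - α)) * (((n : ℝ) - 1) ^ (-α) - (n : ℝ) ^ (-α))

/-- Discrete convolution powers: `convPow f k` is `f^{*(k+1)}`. -/
noncomputable def convPow (f : ℕ → ℝ) : ℕ → ℕ → ℝ
  | 0 => f
  | (k + 1) => fun n => ∑ m ∈ Finset.Ico 1 n, convPow f k m * f (n - m)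

/-- Renewal kernel of `f` with parameter `a`: `ψ_n = Σ_{k ≥ 1} a^k (f^{*k})_n`. -/
noncomputable def renewalKernel (f : ℕ → ℝ) (a : ℝ) (n : ℕ) : ℝ :=
  ∑' k : ℕ, a ^ (k + 1) * convPow f k n

/-- The rescaled step function `ζ(t) = ((1-a)/a)·τ·ψ_{⌊tτ⌋}`. -/
noncomputable def stepKernel (f : ℕ → ℝ) (a : ℝ) (τ : ℕ) (t : ℝ) : ℝ :=
  ((1 - a) / a) * (τ : ℝ) * renewalKernel f a ⌊t * (τ : ℝ)⌋₊

/-- `ζ^τ`, the rescaled renewal kernel of the base kernel with `a_τ = 1 - γ τ^{-α}`. -/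
noncomputable def zetaTau (α γ : ℝ) (τ : ℕ) (t : ℝ) : ℝ :=
  stepKernel (baseKernel α) (1 - γ * (τ : ℝ) ^ (-α)) τ t

open Real

noncomputable def genFun (f : ℕ → ℝ) (x : ℝ) : ℝ := ∑' n, f n * x ^ n

section Renewal

variable {f : ℕ → ℝ} {x a Φ : ℝ}

lemma convPow_nonneg (hf : ∀ n, 0 ≤ f n) (k n : ℕ) : 0 ≤ convPow f k n := by
  induction k generalizing n with
  | zero => exact hf n
  | succ k ih => exact Finset.sum_nonneg fun m _ => mul_nonneg (ih m) (hf _)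

lemma convPow_apply_zero (hf0 : f 0 = 0) (k : ℕ) : convPow f k 0 = 0 := by
  cases k <;> simp [convPow, hf0]

/-- The convolution sum over `Ico 1 n` is a full Cauchy-product sum, since its end terms vanish. -/
lemma convPow_succ_mul_pow (hf0 : f 0 = 0) (k n : ℕ) :
    convPow f (k + 1) n * x ^ n =
      ∑ m ∈ Finset.range (n + 1), (convPow f k m * x ^ m) * (f (n - m) * x ^ (n - m)) := by
  rw [convPow, Finset.sum_mul]
  calc ∑ m ∈ Finset.Ico 1 n, convPow f k m * f (n - m) * x ^ n
      = ∑ m ∈ Finset.Ico 1 n, (convPow f k m * x ^ m) * (f (n - m) * x ^ (n - m)) :=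
        Finset.sum_congr rfl fun m hm => by
          rw [mul_mul_mul_comm, ← pow_add, Nat.add_sub_cancel' (Finset.mem_Ico.1 hm).2.le,
            mul_right_comm]
    _ = _ := Finset.sum_subset
        (fun m hm => by simp only [Finset.mem_Ico, Finset.mem_range] at hm ⊢; omega)
        fun m hm hm' => by
          simp only [Finset.mem_Ico, Finset.mem_range, not_and_or, not_le, not_lt] at hm hm'
          obtain rfl | rfl : m = 0 ∨ m = n := by omega
          · simp [convPow_apply_zero hf0]
          · simp [hf0]

lemma hasSum_convPow_mul_pow (hf0 : f 0 = 0)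
    (hΦ : HasSum (fun n => f n * x ^ n) Φ) (k : ℕ) :
    HasSum (fun n => convPow f k n * x ^ n) (Φ ^ (k + 1)) := by
  induction k with
  | zero => rw [zero_add, pow_one]; exact hΦ
  | succ k ih =>
    have hprod := hasSum_sum_range_mul_of_summable_norm (R := ℝ)
      (f := fun n => convPow f k n * x ^ n) (g := fun n => f n * x ^ n)
      ih.summable.norm hΦ.summable.norm
    rw [ih.tsum_eq, hΦ.tsum_eq, ← pow_succ] at hprod
    simpa only [convPow_succ_mul_pow hf0] using hprod

/-- Tonelli: the double series `Σ_{k,n} a^{k+1} f^{*(k+1)}_n xⁿ` has nonnegative terms and its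
rows sum to `(aΦ)^{k+1}`. -/
lemma hasSum_renewalKernel_mul_pow (hf : ∀ n, 0 ≤ f n) (hf0 : f 0 = 0) (hx : 0 ≤ x)
    (hΦ : HasSum (fun n => f n * x ^ n) Φ) (ha : 0 ≤ a) (haΦ : a * Φ < 1) :
    HasSum (fun n => renewalKernel f a n * x ^ n) (a * Φ / (1 - a * Φ)) := by
  set u : ℕ × ℕ → ℝ := fun p => a ^ (p.1 + 1) * convPow f p.1 p.2 * x ^ p.2
  have hu : 0 ≤ u := fun p => by
    have := convPow_nonneg hf p.1 p.2
    positivity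
  have hrow (k : ℕ) : HasSum (fun n => u (k, n)) ((a * Φ) ^ (k + 1)) := by
    simpa only [u, mul_assoc, mul_pow] using
      (hasSum_convPow_mul_pow hf0 hΦ k).mul_left (a ^ (k + 1))
  have hgeom : HasSum (fun k : ℕ => (a * Φ) ^ (k + 1)) (a * Φ / (1 - a * Φ)) := by
    have hΦ0 : 0 ≤ Φ := hΦ.nonneg fun n => mul_nonneg (hf n) (pow_nonneg hx n)
    simpa only [pow_succ', div_eq_mul_inv] using
      (hasSum_geometric_of_lt_one (mul_nonneg ha hΦ0) haΦ).mul_left (a * Φ)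
  have hs : Summable u := (summable_prod_of_nonneg hu).2
    ⟨fun k => (hrow k).summable, hgeom.summable.congr fun k => (hrow k).tsum_eq.symm⟩
  have hsum : HasSum u (a * Φ / (1 - a * Φ)) := by
    rw [hgeom.unique (hs.hasSum.prod_fiberwise hrow)]
    exact hs.hasSum
  refine ((Equiv.prodComm ℕ ℕ).hasSum_iff.2 hsum).prod_fiberwise fun n => ?_
  show HasSum (fun k => a ^ (k + 1) * convPow f k n * x ^ n) (renewalKernel f a n * x ^ n)
  rw [renewalKernel, ← tsum_mul_right]
  exact (hs.prod_symm.prod_factor n).hasSum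

lemma hasSum_genFun (hf : ∀ n, 0 ≤ f n) (hfs : Summable f) (hx0 : 0 ≤ x) (hx1 : x ≤ 1) :
    HasSum (fun n => f n * x ^ n) (genFun f x) :=
  (hfs.of_nonneg_of_le (fun n => mul_nonneg (hf n) (pow_nonneg hx0 n))
    fun n => mul_le_of_le_one_right (hf n) (pow_le_one₀ hx0 hx1)).hasSum

lemma genFun_le_one (hf : ∀ n, 0 ≤ f n) (hf1 : HasSum f 1) (hx0 : 0 ≤ x) (hx1 : x ≤ 1) :
    genFun f x ≤ 1 :=
  hasSum_le (fun n => mul_le_of_le_one_right (hf n) (pow_le_one₀ hx0 hx1))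
    (hasSum_genFun hf hf1.summable hx0 hx1) hf1

lemma hasSum_renewalKernel (hf : ∀ n, 0 ≤ f n) (hf0 : f 0 = 0) (hf1 : HasSum f 1) (ha0 : 0 ≤ a)
    (ha1 : a < 1) : HasSum (renewalKernel f a) (a / (1 - a)) := by
  simpa using hasSum_renewalKernel_mul_pow hf hf0 zero_le_one (Φ := 1) (by simpa using hf1) ha0
    (by simpa using ha1)

lemma renewalKernel_nonneg (hf : ∀ n, 0 ≤ f n) (ha0 : 0 ≤ a) (n : ℕ) : 0 ≤ renewalKernel f a n :=
  tsum_nonneg fun k => mul_nonneg (pow_nonneg ha0 _) (convPow_nonneg hf k n)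

end Renewal

section StepLaplace

variable {z : ℝ}

lemma integral_Ico_exp_neg_mul (hz : z ≠ 0) (n : ℕ) :
    ∫ t in Ico (n : ℝ) (n + 1), exp (-(z * t)) = exp (-z) ^ n * ((1 - exp (-z)) / z) := by
  rw [integral_Ico_eq_integral_Ioc, ← intervalIntegral.integral_of_le (by linarith),
    intervalIntegral.integral_comp_mul_left (fun y => exp (-y)) hz]
  simp only [intervalIntegral.integral_comp_neg, integral_exp, smul_eq_mul]
  rw [← exp_nat_mul, show -(z * (n + 1)) = -(z * n) + -z by ring, exp_add]
  field_simp

lemma integral_Ioi_exp_neg_mul_comp_floor (hz : 0 < z) {g : ℕ → ℝ} {C : ℝ}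
    (hg : ∀ n, |g n| ≤ C) :
    ∫ t in Ioi 0, exp (-(z * t)) * g ⌊t⌋₊ = (1 - exp (-z)) / z * ∑' n, g n * exp (-z) ^ n := by
  have hdisj : Pairwise (Function.onFun Disjoint fun n : ℕ => Ico (n : ℝ) (n + 1)) :=
    fun m n hmn => Set.disjoint_left.2 fun t hm hn =>
      hmn ((Nat.floor_eq_on_Ico m t hm).symm.trans (Nat.floor_eq_on_Ico n t hn))
  have hunion : ⋃ n : ℕ, Ico (n : ℝ) (n + 1) = Ici 0 := by
    ext t
    simp only [mem_iUnion, mem_Ici, mem_Ico]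
    exact ⟨fun ⟨n, hn, _⟩ => (Nat.cast_nonneg n).trans hn,
      fun ht => ⟨⌊t⌋₊, Nat.floor_le ht, Nat.lt_floor_add_one t⟩⟩
  have hint : IntegrableOn (fun t => exp (-(z * t)) * g ⌊t⌋₊) (Ici 0) := by
    refine Integrable.mono' (IntegrableOn.congr_set_ae
      ((exp_neg_integrableOn_Ioi 0 hz).const_mul C) Ioi_ae_eq_Ici.symm) ?_
      (ae_of_all _ fun t => ?_)
    · exact (continuous_exp.comp (continuous_const.mul continuous_id).neg).aestronglyMeasurable.mul
        (measurable_from_nat.comp Nat.measurable_floor).aestronglyMeasurable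
    · rw [norm_mul, norm_of_nonneg (exp_pos _).le, neg_mul, mul_comm]
      exact mul_le_mul_of_nonneg_right (hg _) (exp_pos _).le
  have hpieces := hasSum_integral_iUnion (fun n => measurableSet_Ico) hdisj (hunion ▸ hint)
  rw [← integral_Ici_eq_integral_Ioi, ← hunion, ← hpieces.tsum_eq, ← tsum_mul_left]
  refine tsum_congr fun n => ?_
  rw [setIntegral_congr_fun measurableSet_Ico fun t ht => by rw [Nat.floor_eq_on_Ico n t ht],
    integral_mul_const, integral_Ico_exp_neg_mul hz.ne']
  ring

lemma integral_Ioi_exp_neg_mul_comp_floor_mul (hz : 0 < z) {c : ℝ} (hc : 0 < c) {g : ℕ → ℝ}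
    {C : ℝ} (hg : ∀ n, |g n| ≤ C) :
    ∫ t in Ioi 0, exp (-(z * t)) * g ⌊t * c⌋₊ =
      (1 - exp (-(z / c))) / z * ∑' n, g n * exp (-(z / c)) ^ n := by
  have hscale := integral_comp_mul_right_Ioi (fun u => exp (-(z / c * u)) * g ⌊u⌋₊) 0 hc
  simp only [zero_mul, smul_eq_mul] at hscale
  rw [integral_Ioi_exp_neg_mul_comp_floor (div_pos hz hc) hg] at hscale
  have hzt (t : ℝ) : z / c * (t * c) = z * t := by field_simp
  simp only [hzt] at hscale
  rw [hscale]
  field_simp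

lemma integral_exp_neg_mul_stepKernel {f : ℕ → ℝ} {a : ℝ} {τ : ℕ} (hf : ∀ n, 0 ≤ f n)
    (hf0 : f 0 = 0) (hf1 : HasSum f 1) (ha0 : 0 < a) (ha1 : a < 1) (hz : 0 < z) (hτ : 0 < τ) :
    ∫ t in Ioi 0, exp (-(z * t)) * stepKernel f a τ t =
      (1 - a) * τ * ((1 - exp (-(z / τ))) / z) *
        (genFun f (exp (-(z / τ))) / (1 - a * genFun f (exp (-(z / τ))))) := by
  set x := exp (-(z / τ)) with hx
  have hx0 : 0 ≤ x := (exp_pos _).le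
  have hx1 : x ≤ 1 := exp_le_one_iff.2 (by simp only [neg_nonpos]; positivity)
  have haΦ : a * genFun f x < 1 :=
    (mul_le_of_le_one_right ha0.le (genFun_le_one hf hf1 hx0 hx1)).trans_lt ha1
  have hψ (n : ℕ) : |renewalKernel f a n| ≤ a / (1 - a) := by
    rw [abs_of_nonneg (renewalKernel_nonneg hf ha0.le n)]
    exact le_hasSum (hasSum_renewalKernel hf hf0 hf1 ha0.le ha1) n
      fun m _ => renewalKernel_nonneg hf ha0.le m
  have hτ' : (0 : ℝ) < τ := Nat.cast_pos.2 hτ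
  simp only [stepKernel, mul_left_comm (exp _), integral_const_mul,
    integral_Ioi_exp_neg_mul_comp_floor_mul hz hτ' hψ]
  rw [← hx, (hasSum_renewalKernel_mul_pow hf hf0 hx0 (hasSum_genFun hf hf1.summable hx0 hx1)
    ha0.le haΦ).tsum_eq]
  field_simp

end StepLaplace

lemma tendsto_rpow_const_nhds_zero {p : ℝ} (hp : 0 < p) :
    Tendsto (fun s : ℝ => s ^ p) (𝓝 0) (𝓝 0) := by
  simpa [zero_rpow hp.ne'] using (continuousAt_rpow_const 0 p (Or.inr hp.le)).tendsto

lemma tendsto_one_sub_exp_neg_div : Tendsto (fun s => (1 - exp (-s)) / s) (𝓝[≠] 0) (𝓝 1) := by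
  have h : HasDerivAt (fun s => 1 - exp (-s)) 1 0 := by
    simpa using ((hasDerivAt_neg (0 : ℝ)).exp).const_sub 1
  simpa [div_eq_inv_mul] using h.tendsto_slope_zero

section BaseKernel

variable {α : ℝ}

lemma one_le_Gamma_one_sub (hα0 : 0 ≤ α) (hα1 : α < 1) : 1 ≤ Gamma (1 - α) := by
  simpa [Gamma_one] using
    Gamma_strictAntiOn_Ioc.antitoneOn ⟨by linarith, by linarith⟩ ⟨one_pos, le_rfl⟩ (by linarith)

/-- `baseTail α n = Σ_{m > n} φ_m`. -/
noncomputable def baseTail (α : ℝ) (n : ℕ) : ℝ :=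
  if n = 0 then 1 else (n : ℝ) ^ (-α) / Gamma (1 - α)

lemma baseKernel_succ (n : ℕ) : baseKernel α (n + 1) = baseTail α n - baseTail α (n + 1) := by
  rcases eq_or_ne n 0 with rfl | hn
  · simp [baseKernel, baseTail]
  · simp only [baseKernel, baseTail, hn, Nat.add_one_ne_zero, if_false, add_eq_right]
    push_cast
    rw [add_sub_cancel_right]
    ring

lemma baseTail_succ_le (hα0 : 0 ≤ α) (hα1 : α < 1) (n : ℕ) :
    baseTail α (n + 1) ≤ baseTail α n := by
  have hΓ := one_le_Gamma_one_sub hα0 hα1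
  rcases eq_or_ne n 0 with rfl | hn
  · simp only [baseTail, zero_add, one_ne_zero, if_false, if_true, Nat.cast_one, one_rpow]
    exact (div_le_one (by linarith)).2 hΓ
  · simp only [baseTail, hn, Nat.add_one_ne_zero, if_false]
    exact div_le_div_of_nonneg_right
      (rpow_le_rpow_of_nonpos (by positivity) (by simp) (by linarith)) (by linarith)

lemma baseTail_nonneg (hα1 : α < 1) (n : ℕ) : 0 ≤ baseTail α n := by
  have hΓ := Gamma_pos_of_pos (by linarith : 0 < 1 - α)
  unfold baseTail
  split_ifs
  · exact zero_le_one
  · positivity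

lemma baseTail_le_one (hα0 : 0 ≤ α) (hα1 : α < 1) (n : ℕ) : baseTail α n ≤ 1 :=
  antitone_nat_of_succ_le (baseTail_succ_le hα0 hα1) (Nat.zero_le n)

lemma tendsto_baseTail (hα : 0 < α) : Tendsto (baseTail α) atTop (𝓝 0) := by
  have h := ((tendsto_rpow_neg_atTop hα).comp tendsto_natCast_atTop_atTop).div_const
    (Gamma (1 - α))
  rw [zero_div] at h
  refine h.congr' ?_
  filter_upwards [eventually_ne_atTop 0] with n hn
  simp [baseTail, hn]

lemma baseKernel_nonneg (hα0 : 0 ≤ α) (hα1 : α < 1) (n : ℕ) : 0 ≤ baseKernel α n := by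
  cases n with
  | zero => exact le_rfl
  | succ n => rw [baseKernel_succ]; linarith [baseTail_succ_le hα0 hα1 n]

lemma sum_range_succ_baseKernel (n : ℕ) :
    ∑ i ∈ Finset.range (n + 1), baseKernel α i = 1 - baseTail α n := by
  rw [Finset.sum_range_succ', Finset.sum_congr rfl fun i _ => baseKernel_succ i,
    Finset.sum_range_sub']
  simp [baseKernel, baseTail]

lemma hasSum_baseKernel (hα : α ∈ Ioo 0 1) : HasSum (baseKernel α) 1 := by
  rw [hasSum_iff_tendsto_nat_of_nonneg (baseKernel_nonneg hα.1.le hα.2),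
    ← tendsto_add_atTop_iff_nat 1]
  simpa only [sum_range_succ_baseKernel, sub_zero] using (tendsto_baseTail hα.1).const_sub 1

lemma summable_baseTail_mul_pow (hα0 : 0 ≤ α) (hα1 : α < 1) {x : ℝ} (hx0 : 0 ≤ x)
    (hx1 : x < 1) :
    Summable fun n => baseTail α n * x ^ n :=
  (summable_geometric_of_lt_one hx0 hx1).of_nonneg_of_le
    (fun n => mul_nonneg (baseTail_nonneg hα1 n) (pow_nonneg hx0 n))
    fun n => mul_le_of_le_one_left (pow_nonneg hx0 n) (baseTail_le_one hα0 hα1 n)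

lemma one_sub_genFun_baseKernel (hα0 : 0 ≤ α) (hα1 : α < 1) {x : ℝ} (hx0 : 0 ≤ x)
    (hx1 : x < 1) :
    1 - genFun (baseKernel α) x = (1 - x) * ∑' n, baseTail α n * x ^ n := by
  obtain ⟨D, hD⟩ := summable_baseTail_mul_pow hα0 hα1 hx0 hx1
  have hshift : HasSum (fun n => baseTail α (n + 1) * x ^ (n + 1)) (D - 1) := by
    simpa [baseTail] using (hasSum_nat_add_iff' 1).2 hD
  have hmul : HasSum (fun n => baseTail α n * x ^ (n + 1)) (x * D) := by
    simpa only [pow_succ, mul_left_comm x, mul_comm x, mul_assoc] using hD.mul_left x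
  have hΦ : HasSum (fun n => baseKernel α n * x ^ n) (x * D - (D - 1)) := by
    refine (hasSum_nat_add_iff' 1).1 ?_
    rw [Finset.sum_range_one, show baseKernel α 0 = 0 from if_pos rfl, zero_mul, sub_zero]
    simpa only [baseKernel_succ, sub_mul] using hmul.sub hshift
  rw [genFun, hΦ.tsum_eq, hD.tsum_eq]
  ring

end BaseKernel

section Polylog

variable {α s : ℝ}

/-- The polylogarithm `Li_α(e^{-s})`. -/
noncomputable def polylogExp (α s : ℝ) : ℝ :=
  ∑' n : ℕ, ((n + 1 : ℕ) : ℝ) ^ (-α) * exp (-(s * (n + 1 : ℕ)))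

lemma integrableOn_rpow_neg_mul_exp_neg_mul (hα1 : α < 1) (hs : 0 < s) :
    IntegrableOn (fun t => t ^ (-α) * exp (-(s * t))) (Ioi 0) := by
  simpa [rpow_one, neg_mul] using
    integrableOn_rpow_mul_exp_neg_mul_rpow (p := 1) (s := -α) (by linarith) one_pos hs

lemma integral_rpow_neg_mul_exp_neg_mul (hα1 : α < 1) (hs : 0 < s) :
    ∫ t in Ioi 0, t ^ (-α) * exp (-(s * t)) = s ^ (α - 1) * Gamma (1 - α) := by
  have h := integral_rpow_mul_exp_neg_mul_Ioi (a := 1 - α) (by linarith) hs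
  rwa [sub_sub_cancel_left, one_div, inv_rpow hs.le, ← rpow_neg hs.le, neg_sub] at h

lemma integral_Ioc_rpow_neg_mul_exp_neg_mul_le (hα1 : α < 1) (hs : 0 < s) :
    ∫ t in Ioc 0 1, t ^ (-α) * exp (-(s * t)) ≤ 1 / (1 - α) := by
  have hint : IntegrableOn (fun t : ℝ => t ^ (-α)) (Ioc 0 1) :=
    (intervalIntegrable_iff_integrableOn_Ioc_of_le zero_le_one).1
      (intervalIntegral.intervalIntegrable_rpow' (by linarith))
  have hval : ∫ t in Ioc 0 1, t ^ (-α) = 1 / (1 - α) := by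
    rw [← intervalIntegral.integral_of_le zero_le_one, integral_rpow (Or.inl (by linarith)),
      one_rpow, zero_rpow (by linarith)]
    ring_nf
  refine hval ▸ setIntegral_mono_on
    ((integrableOn_rpow_neg_mul_exp_neg_mul hα1 hs).mono_set Ioc_subset_Ioi_self) hint
    measurableSet_Ioc fun t ht => mul_le_of_le_one_right (rpow_nonneg ht.1.le _) ?_
  exact exp_le_one_iff.2 (neg_nonpos.2 (mul_nonneg hs.le ht.1.le))

/-- Integral test on `[1, ∞)` for `t ↦ t^{-α} e^{-st}`. -/
lemma polylogExp_bounds (hα0 : 0 ≤ α) (hα1 : α < 1) (hs : 0 < s) :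
    s ^ (α - 1) * Gamma (1 - α) - 1 / (1 - α) ≤ polylogExp α s ∧
      polylogExp α s ≤ 1 + s ^ (α - 1) * Gamma (1 - α) := by
  set F : ℝ → ℝ := fun t => t ^ (-α) * exp (-(s * t))
  have hint := integrableOn_rpow_neg_mul_exp_neg_mul hα1 hs
  have hint1 : IntegrableOn F (Ioi ((1 : ℕ) : ℝ)) :=
    hint.mono_set (Nat.cast_one (R := ℝ) ▸ Ioi_subset_Ioi zero_le_one)
  have hanti : AntitoneOn F (Ici ((1 : ℕ) : ℝ)) := fun a ha b hb hab => by
    simp only [Nat.cast_one, mem_Ici] at ha hb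
    exact mul_le_mul (rpow_le_rpow_of_nonpos (by linarith) hab (by linarith))
      (exp_le_exp.2 (by nlinarith)) (exp_pos _).le (rpow_nonneg (by linarith) _)
  have hnonneg : ∀ t ∈ Ioi ((1 : ℕ) : ℝ), 0 ≤ F t := fun t ht => by
    simp only [Nat.cast_one, mem_Ioi] at ht
    exact mul_nonneg (rpow_nonneg (by linarith) _) (exp_pos _).le
  have hsum := hanti.summable_of_integrableOn_Ioi hint1 hnonneg
  have hlow := hanti.integral_le_tsum_comp_add 1 hsum hnonneg
  have hupp := hanti.tsum_comp_add_le_integral 1 hint1 hnonneg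
  have hsplit : ∫ t in Ioi 0, F t = (∫ t in Ioc 0 1, F t) + ∫ t in Ioi 1, F t := by
    rw [← setIntegral_union Ioc_disjoint_Ioi_same measurableSet_Ioi
      (hint.mono_set Ioc_subset_Ioi_self) (hint.mono_set (Ioi_subset_Ioi zero_le_one)),
      Ioc_union_Ioi_eq_Ioi zero_le_one]
  have hIoc_le : ∫ t in Ioc 0 1, F t ≤ 1 / (1 - α) := integral_Ioc_rpow_neg_mul_exp_neg_mul_le hα1 hs
  have hIoc_nonneg : 0 ≤ ∫ t in Ioc 0 1, F t := setIntegral_nonneg measurableSet_Ioc fun t ht =>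
    mul_nonneg (rpow_nonneg ht.1.le _) (exp_pos _).le
  have hF1 : F ((0 + 1 : ℕ) : ℝ) ≤ 1 := by simp [F, exp_le_one_iff, hs.le]
  rw [integral_rpow_neg_mul_exp_neg_mul hα1 hs] at hsplit
  simp only [Nat.cast_one] at hlow hupp
  have hP0 : polylogExp α s = ∑' n : ℕ, F ↑(n + 1) := rfl
  have hP : polylogExp α s = F ((0 + 1 : ℕ) : ℝ) + ∑' n : ℕ, F ↑(n + 1 + 1) :=
    ((summable_nat_add_iff 1).2 hsum).tsum_eq_zero_add
  constructor <;> linarith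

lemma tendsto_rpow_mul_polylogExp (hα0 : 0 ≤ α) (hα1 : α < 1) :
    Tendsto (fun s => s ^ (1 - α) * polylogExp α s) (𝓝[>] 0) (𝓝 (Gamma (1 - α))) := by
  have hpow : Tendsto (fun s : ℝ => s ^ (1 - α)) (𝓝[>] 0) (𝓝 0) :=
    (tendsto_rpow_const_nhds_zero (by linarith)).mono_left nhdsWithin_le_nhds
  have hlow := (hpow.div_const (1 - α)).const_sub (Gamma (1 - α))
  have hupp := hpow.add_const (Gamma (1 - α))
  rw [zero_div, sub_zero] at hlow
  rw [zero_add] at hupp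
  refine tendsto_of_tendsto_of_tendsto_of_le_of_le' hlow hupp ?_ ?_ <;>
    filter_upwards [self_mem_nhdsWithin] with s (hs : 0 < s)
  all_goals
    have hinv : s ^ (1 - α) * s ^ (α - 1) = 1 := by rw [← rpow_add hs]; simp
    have hpos : 0 ≤ s ^ (1 - α) := rpow_nonneg hs.le _
    obtain ⟨hl, hu⟩ := polylogExp_bounds hα0 hα1 hs
  · calc Gamma (1 - α) - s ^ (1 - α) / (1 - α)
        = s ^ (1 - α) * (s ^ (α - 1) * Gamma (1 - α) - 1 / (1 - α)) := by
          rw [mul_sub, ← mul_assoc, hinv]; ring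
      _ ≤ s ^ (1 - α) * polylogExp α s := mul_le_mul_of_nonneg_left hl hpos
  · calc s ^ (1 - α) * polylogExp α s
        ≤ s ^ (1 - α) * (1 + s ^ (α - 1) * Gamma (1 - α)) := mul_le_mul_of_nonneg_left hu hpos
      _ = s ^ (1 - α) + Gamma (1 - α) := by rw [mul_add, ← mul_assoc, hinv]; ring

end Polylog

section Asymptotics

variable {α : ℝ}

lemma tsum_baseTail_mul_exp_neg (hα0 : 0 ≤ α) (hα1 : α < 1) {s : ℝ} (hs : 0 < s) :
    ∑' n, baseTail α n * exp (-s) ^ n = 1 + polylogExp α s / Gamma (1 - α) := by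
  rw [(summable_baseTail_mul_pow hα0 hα1 (exp_pos _).le
    (exp_lt_one_iff.2 (by linarith))).tsum_eq_zero_add, polylogExp, ← tsum_div_const]
  congr 1
  · simp [baseTail]
  · refine tsum_congr fun n => ?_
    rw [← exp_nat_mul, baseTail, if_neg n.add_one_ne_zero]
    ring_nf

lemma tendsto_one_sub_genFun_baseKernel_div_rpow (hα0 : 0 ≤ α) (hα1 : α < 1) :
    Tendsto (fun s => (1 - genFun (baseKernel α) (exp (-s))) / s ^ α) (𝓝[>] 0) (𝓝 1) := by
  have hΓ : Gamma (1 - α) ≠ 0 := (Gamma_pos_of_pos (by linarith)).ne'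
  have hE := tendsto_one_sub_exp_neg_div.mono_left (nhdsWithin_mono 0 fun _ => ne_of_gt)
  have hpow : Tendsto (fun s : ℝ => s ^ (1 - α)) (𝓝[>] 0) (𝓝 0) :=
    (tendsto_rpow_const_nhds_zero (by linarith)).mono_left nhdsWithin_le_nhds
  have hlim := hE.mul
    (hpow.add ((tendsto_rpow_mul_polylogExp hα0 hα1).div_const (Gamma (1 - α))))
  rw [zero_add, div_self hΓ, one_mul] at hlim
  refine hlim.congr' ?_
  filter_upwards [self_mem_nhdsWithin] with s (hs : 0 < s)
  rw [one_sub_genFun_baseKernel hα0 hα1 (exp_pos _).le (exp_lt_one_iff.2 (by linarith)),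
    tsum_baseTail_mul_exp_neg hα0 hα1 hs, rpow_sub hs, rpow_one]
  field_simp

lemma tendsto_genFun_baseKernel_exp_neg (hα : α ∈ Ioo 0 1) :
    Tendsto (fun s => genFun (baseKernel α) (exp (-s))) (𝓝[>] 0) (𝓝 1) := by
  have h := ((tendsto_one_sub_genFun_baseKernel_div_rpow hα.1.le hα.2).mul
    ((tendsto_rpow_const_nhds_zero hα.1).mono_left nhdsWithin_le_nhds)).const_sub 1
  rw [mul_zero, sub_zero] at h
  refine h.congr' ?_
  filter_upwards [self_mem_nhdsWithin] with s (hs : 0 < s)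
  rw [div_mul_cancel₀ _ (rpow_pos_of_pos hs α).ne']
  ring

end Asymptotics

lemma integral_exp_neg_mul_zetaTau {α γ z : ℝ} (hα : α ∈ Ioo 0 1) (hγ : 0 < γ) (hz : 0 < z)
    {τ : ℕ} (hτ : 0 < τ) (hsmall : γ * (τ : ℝ) ^ (-α) < 1) :
    ∫ t in Ioi 0, exp (-(z * t)) * zetaTau α γ τ t =
      γ * ((1 - exp (-(z / τ))) / (z / τ)) * genFun (baseKernel α) (exp (-(z / τ))) /
        (z ^ α * ((1 - genFun (baseKernel α) (exp (-(z / τ)))) / (z / τ) ^ α) +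
          γ * genFun (baseKernel α) (exp (-(z / τ)))) := by
  have hτ' : (0 : ℝ) < τ := Nat.cast_pos.2 hτ
  have hτα : 0 < (τ : ℝ) ^ (-α) := rpow_pos_of_pos hτ' _
  simp only [zetaTau]
  rw [integral_exp_neg_mul_stepKernel (baseKernel_nonneg hα.1.le hα.2) rfl (hasSum_baseKernel hα)
    (by linarith) (by nlinarith) hz hτ]
  set s := z / τ with hs
  set Φ := genFun (baseKernel α) (exp (-s))
  have hs0 : 0 < s := div_pos hz hτ'
  have hzs : z = τ * s := by rw [hs, mul_div_cancel₀ _ hτ'.ne']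
  have hzα : z ^ α * ((1 - Φ) / s ^ α) = (τ : ℝ) ^ α * (1 - Φ) := by
    rw [hzs, mul_rpow hτ'.le hs0.le]
    field_simp [(rpow_pos_of_pos hs0 α).ne']
  have hτα' : (τ : ℝ) ^ α ≠ 0 := (rpow_pos_of_pos hτ' α).ne'
  rw [hzα, hzs, rpow_neg hτ'.le]
  field_simp
  ring

/-- Pointwise convergence of the Laplace transforms of the rescaled renewal kernels:
`∫_0^∞ e^{-zt} ζ^τ(t) dt → γ/(γ + z^α)` as `τ → ∞` along the integers. -/
theorem zetaTau_laplace_tendsto (α γ z : ℝ) (hα : α ∈ Set.Ioo (0 : ℝ) 1)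
    (hγ : 0 < γ) (hz : 0 < z) :
    Filter.Tendsto
      (fun τ : ℕ => ∫ t in Set.Ioi (0 : ℝ), Real.exp (-(z * t)) * zetaTau α γ τ t)
      Filter.atTop (nhds (γ / (γ + z ^ α))) := by
  have hs : Tendsto (fun τ : ℕ => z / τ) atTop (𝓝[>] 0) :=
    tendsto_nhdsWithin_iff.2 ⟨tendsto_const_div_atTop_nhds_zero_nat z,
      eventually_gt_atTop 0 |>.mono fun τ hτ => div_pos hz (Nat.cast_pos.2 hτ)⟩
  have hE := (tendsto_one_sub_exp_neg_div.mono_left (nhdsWithin_mono 0 fun _ => ne_of_gt)).comp hs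
  have hR := (tendsto_one_sub_genFun_baseKernel_div_rpow hα.1.le hα.2).comp hs
  have hΦ := (tendsto_genFun_baseKernel_exp_neg hα).comp hs
  have hlim := ((hE.const_mul γ).mul hΦ).div ((hR.const_mul (z ^ α)).add (hΦ.const_mul γ))
    (by positivity)
  have hsmall : ∀ᶠ τ : ℕ in atTop, γ * (τ : ℝ) ^ (-α) < 1 := by
    have h := ((tendsto_rpow_neg_atTop hα.1).comp tendsto_natCast_atTop_atTop).const_mul γ
    exact (mul_zero γ ▸ h).eventually_lt_const zero_lt_one
  rw [show γ / (γ + z ^ α) = γ * 1 * 1 / (z ^ α * 1 + γ * 1) by ring]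
  refine hlim.congr' ?_
  filter_upwards [eventually_gt_atTop 0, hsmall] with τ hτ hτs
  exact (integral_exp_neg_mul_zetaTau hα hγ hz hτ hτs).symm
end

section
/- Let P be a real-valued random variable on a probability space with E[e^P] < ∞. Then the function u ↦ E[e^{(1/2 + iu)P}]/(1/4 + u²) is integrable on ℝ and E[(e^P − 1)^+] = E[e^P] − (1/(2π)) ∫_ℝ E[e^{(1/2 + iu)P}]/(1/4 + u²) du. (Carr–Madan representation of the undiscounted call price in log-moneyness form.) -/
/-!
The Fourier transform of `x ↦ exp (-2πγ|x|)` is the Cauchy density with scale `γ`, so Fourier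
inversion gives `∫ e^{iup} / (1/4 + u²) du = 2π e^{-|p|/2}`; multiplying by `e^{p/2}`, the
`u`-integral of `e^{(1/2+iu)p} / (1/4 + u²)` is `2π min(e^p, 1)`. Since
`|e^{(1/2+iu)P}| = e^{P/2} ≤ 1 + e^P`, Fubini averages this over `P`, and
`(e^p - 1)⁺ = e^p - min(e^p, 1)`.
-/

open MeasureTheory Set Complex
open ProbabilityTheory (cauchyPDFReal cauchyPDFReal_def integrable_cauchyPDFReal)
open scoped Real NNReal FourierTransform

lemma integrable_exp_neg_mul_abs {b : ℝ} (hb : 0 < b) :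
    Integrable (fun x : ℝ => rexp (-b * |x|)) := by
  have hIic : IntegrableOn (fun x : ℝ => rexp (-b * |x|)) (Iic 0) :=
    (integrableOn_exp_mul_Iic hb 0).congr_fun
      (fun x (hx : x ≤ 0) => by simp [abs_of_nonpos hx]) measurableSet_Iic
  have hIoi : IntegrableOn (fun x : ℝ => rexp (-b * |x|)) (Ioi 0) :=
    (integrableOn_exp_mul_Ioi (neg_neg_of_pos hb) 0).congr_fun
      (fun x (hx : 0 < x) => by simp [abs_of_pos hx]) measurableSet_Ioi
  simpa [← integrableOn_univ] using hIic.union hIoi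

lemma integrable_cexp_mul_I_mul_exp_neg_mul_abs {b : ℝ} (hb : 0 < b) (s : ℝ) :
    Integrable (fun x : ℝ => cexp (s * x * I) * rexp (-b * |x|)) :=
  (integrable_exp_neg_mul_abs hb).ofReal.bdd_mul (by fun_prop)
    (.of_forall fun x => by rw [← ofReal_mul, norm_exp_ofReal_mul_I])

lemma integral_cexp_mul_I_mul_exp_neg_mul_abs {b : ℝ} (hb : 0 < b) (s : ℝ) :
    ∫ x : ℝ, cexp (s * x * I) * rexp (-b * |x|) = ((2 * b / (b ^ 2 + s ^ 2) : ℝ) : ℂ) := by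
  have hf := integrable_cexp_mul_I_mul_exp_neg_mul_abs hb s
  have hIic : ∫ x : ℝ in Iic 0, cexp (s * x * I) * rexp (-b * |x|) = 1 / (b + s * I) := by
    convert integral_exp_mul_complex_Iic (a := b + s * I) (by simpa using hb) 0 using 1
    · refine setIntegral_congr_fun measurableSet_Iic fun x (hx : x ≤ 0) => ?_
      simp only [abs_of_nonpos hx, ofReal_exp, ← Complex.exp_add]
      push_cast; ring_nf
    · simp
  have hIoi : ∫ x : ℝ in Ioi 0, cexp (s * x * I) * rexp (-b * |x|) = -1 / (-b + s * I) := by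
    convert integral_exp_mul_complex_Ioi (a := -b + s * I) (by simpa using hb) 0 using 1
    · refine setIntegral_congr_fun measurableSet_Ioi fun x (hx : 0 < x) => ?_
      simp only [abs_of_pos hx, ofReal_exp, ← Complex.exp_add]
      push_cast; ring_nf
    · simp
  have h₁ : (b : ℂ) + s * I ≠ 0 := fun h => by simpa [hb.ne'] using congrArg re h
  have h₂ : -(b : ℂ) + s * I ≠ 0 := fun h => by simpa [hb.ne'] using congrArg re h
  have h₃ : (b : ℂ) ^ 2 + s ^ 2 ≠ 0 := by exact_mod_cast (by positivity : b ^ 2 + s ^ 2 ≠ 0)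
  rw [← intervalIntegral.integral_Iic_add_Ioi hf.integrableOn hf.integrableOn, hIic, hIoi]
  push_cast
  field_simp
  linear_combination (-2 * (b : ℂ) * s ^ 2) * I_sq

lemma fourier_exp_neg_two_pi_mul_abs_eq_cauchyPDFReal {γ : ℝ≥0} (hγ : γ ≠ 0) :
    𝓕 (fun x : ℝ => (rexp (-(2 * π * γ) * |x|) : ℂ)) = fun ξ => (cauchyPDFReal 0 γ ξ : ℂ) := by
  ext ξ
  have hγ' : (0 : ℝ) < γ := NNReal.coe_pos.2 (pos_iff_ne_zero.2 hγ)
  rw [Real.fourier_real_eq_integral_exp_smul]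
  convert integral_cexp_mul_I_mul_exp_neg_mul_abs (b := 2 * π * γ) (by positivity) (-(2 * π * ξ))
    using 1
  · congr! 2 with x
    rw [smul_eq_mul]; push_cast; ring_nf
  · rw [cauchyPDFReal_def]
    congr 1
    field_simp
    ring

lemma integral_cexp_mul_I_mul_cauchyPDFReal {γ : ℝ≥0} (hγ : γ ≠ 0) (t : ℝ) :
    ∫ x : ℝ, cexp (t * x * I) * cauchyPDFReal 0 γ x = rexp (-γ * |t|) := by
  have hγ' : (0 : ℝ) < γ := NNReal.coe_pos.2 (pos_iff_ne_zero.2 hγ)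
  have hinv := (show Continuous fun x : ℝ => (rexp (-(2 * π * γ) * |x|) : ℂ) by fun_prop)
    |>.fourierInv_fourier_eq (integrable_exp_neg_mul_abs (by positivity)).ofReal
    (by rw [fourier_exp_neg_two_pi_mul_abs_eq_cauchyPDFReal hγ]
        exact (integrable_cauchyPDFReal 0).ofReal)
  have := congrFun hinv (t / (2 * π))
  rw [Real.fourierInv_eq_fourier_neg, Real.fourier_real_eq_integral_exp_smul,
    fourier_exp_neg_two_pi_mul_abs_eq_cauchyPDFReal hγ] at this
  convert this using 1
  · congr! 2 with x
    rw [smul_eq_mul]; push_cast; field_simp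
  · rw [abs_div, abs_of_pos (by positivity : 0 < 2 * π)]
    push_cast; field_simp

lemma inv_quarter_add_sq_eq_two_pi_mul_cauchyPDFReal (u : ℝ) :
    (1 / 4 + u ^ 2)⁻¹ = 2 * π * cauchyPDFReal 0 (1 / 2) u := by
  rw [cauchyPDFReal_def]
  push_cast
  field_simp
  ring

lemma exp_half_mul_exp_neg_half_abs (p : ℝ) :
    rexp (p / 2) * rexp (-(1 / 2) * |p|) = min (rexp p) 1 := by
  have hexponent : p / 2 + -(1 / 2) * |p| = min p 0 := by
    rcases le_total 0 p with hp | hp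
    · rw [abs_of_nonneg hp, min_eq_right hp]; ring
    · rw [abs_of_nonpos hp, min_eq_left hp]; ring
  rw [← Real.exp_add, hexponent, Real.exp_monotone.map_min, Real.exp_zero]

lemma integral_cexp_half_add_mul_I_mul_div (p : ℝ) :
    ∫ u : ℝ, cexp ((1 / 2 + u * I) * p) / ((1 / 4 + u ^ 2 : ℝ) : ℂ)
      = 2 * π * min (rexp p) 1 := by
  have hsplit (u : ℝ) : cexp ((1 / 2 + u * I) * p) / ((1 / 4 + u ^ 2 : ℝ) : ℂ)
      = (2 * π * rexp (p / 2) : ℝ) * (cexp (p * u * I) * cauchyPDFReal 0 (1 / 2) u) := by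
    have hexp : cexp ((1 / 2 + u * I) * p) = cexp (p / 2) * cexp (p * u * I) := by
      rw [← Complex.exp_add]; ring_nf
    rw [div_eq_mul_inv, ← ofReal_inv, inv_quarter_add_sq_eq_two_pi_mul_cauchyPDFReal, hexp]
    push_cast
    ring
  simp_rw [hsplit, integral_const_mul, integral_cexp_mul_I_mul_cauchyPDFReal one_half_pos.ne']
  rw [← exp_half_mul_exp_neg_half_abs]
  push_cast; ring

section Expectation

variable {Ω : Type*} [MeasurableSpace Ω] {μ : Measure Ω} {P : Ω → ℝ}

lemma integrable_exp_half_of_integrable_exp [IsFiniteMeasure μ] (hP : AEMeasurable P μ)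
    (h : Integrable (fun ω => rexp (P ω)) μ) : Integrable (fun ω => rexp (P ω / 2)) μ := by
  refine (h.add (integrable_const 1)).mono' (by fun_prop) (.of_forall fun ω => ?_)
  have hsq : rexp (P ω / 2) ^ 2 = rexp (P ω) := by rw [← Real.exp_nat_mul]; ring_nf
  rw [Pi.add_apply, Real.norm_of_nonneg (Real.exp_pos _).le]
  nlinarith [sq_nonneg (rexp (P ω / 2) - 1)]

lemma norm_cexp_half_add_mul_I_mul (u p : ℝ) : ‖cexp ((1 / 2 + u * I) * p)‖ = rexp (p / 2) := by
  rw [norm_exp]; congr 1; simp; ring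

lemma integrable_prod_cexp_half_add_mul_I_mul_div [SFinite μ] (hP : AEMeasurable P μ)
    (h : Integrable (fun ω => rexp (P ω / 2)) μ) :
    Integrable (fun z : ℝ × Ω => cexp ((1 / 2 + z.1 * I) * P z.2) / ((1 / 4 + z.1 ^ 2 : ℝ) : ℂ))
      (volume.prod μ) := by
  have hkernel : Integrable fun u : ℝ => (1 / 4 + u ^ 2)⁻¹ := by
    simpa only [inv_quarter_add_sq_eq_two_pi_mul_cauchyPDFReal]
      using (integrable_cauchyPDFReal 0).const_mul (2 * π)
  refine (hkernel.mul_prod h).mono' (AEMeasurable.aestronglyMeasurable ?_)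
    (.of_forall fun z => ?_)
  · have := hP.comp_snd (μ := (volume : Measure ℝ))
    fun_prop
  · rw [norm_div, norm_cexp_half_add_mul_I_mul, norm_real, Real.norm_of_nonneg (by positivity)]
    exact (div_eq_inv_mul _ _).le

lemma integral_integral_cexp_half_add_mul_I_mul_div [SFinite μ] (hP : AEMeasurable P μ)
    (h : Integrable (fun ω => rexp (P ω / 2)) μ) :
    ∫ u : ℝ, (∫ ω, cexp ((1 / 2 + u * I) * P ω) ∂μ) / ((1 / 4 + u ^ 2 : ℝ) : ℂ)
      = 2 * π * ((∫ ω, min (rexp (P ω)) 1 ∂μ : ℝ) : ℂ) := by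
  simp_rw [← integral_div]
  rw [integral_integral_swap (integrable_prod_cexp_half_add_mul_I_mul_div hP h)]
  simp_rw [integral_cexp_half_add_mul_I_mul_div]
  rw [integral_const_mul, integral_complex_ofReal]

end Expectation

lemma max_sub_one_zero (a : ℝ) : max (a - 1) 0 = a - min a 1 := by
  rw [← max_sub_sub_left, sub_self, max_comm]

theorem carr_madan_representation_general {Ω : Type*} [MeasurableSpace Ω]
    (ℙ : Measure Ω) [IsProbabilityMeasure ℙ] (P : Ω → ℝ)
    (hint : Integrable (fun ω => Real.exp (P ω)) ℙ) :
    Integrable (fun u : ℝ =>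
      (∫ ω, Complex.exp (((1 / 2 : ℂ) + (u : ℂ) * Complex.I) * (P ω : ℂ)) ∂ℙ) /
        ((1 / 4 + u ^ 2 : ℝ) : ℂ)) ∧
    ((∫ ω, max (Real.exp (P ω) - 1) 0 ∂ℙ : ℝ) : ℂ)
      = ((∫ ω, Real.exp (P ω) ∂ℙ : ℝ) : ℂ)
        - (1 / (2 * (Real.pi : ℂ))) *
          ∫ u : ℝ, (∫ ω, Complex.exp (((1 / 2 : ℂ) + (u : ℂ) * Complex.I) * (P ω : ℂ)) ∂ℙ) /
            ((1 / 4 + u ^ 2 : ℝ) : ℂ) := by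
  have hP : AEMeasurable P ℙ := by simpa using hint.aemeasurable.log
  have hhalf := integrable_exp_half_of_integrable_exp hP hint
  have hmin : Integrable (fun ω => min (rexp (P ω)) 1) ℙ := hint.inf (integrable_const 1)
  refine ⟨?_, ?_⟩
  · simpa only [integral_div]
      using (integrable_prod_cexp_half_add_mul_I_mul_div hP hhalf).integral_prod_left
  · rw [integral_integral_cexp_half_add_mul_I_mul_div hP hhalf, ← mul_assoc,
      one_div_mul_cancel (by simp [Real.pi_ne_zero]), one_mul, ← ofReal_sub,
      ← integral_sub hint hmin]
    simp_rw [max_sub_one_zero]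

/-- Carr–Madan representation of the undiscounted call price in log-moneyness form:
if `E[e^P] < ∞`, then the damped characteristic function is integrable on the line
`Re z = 1/2` and `E[(e^P - 1)^+] = E[e^P] - (1/(2π)) ∫_ℝ E[e^{(1/2+iu)P}]/(1/4+u²) du`. -/
theorem carr_madan_representation {Ω : Type*} [MeasurableSpace Ω]
    (ℙ : Measure Ω) [IsProbabilityMeasure ℙ] (P : Ω → ℝ) (hP : Measurable P)
    (hint : Integrable (fun ω => Real.exp (P ω)) ℙ) :
    Integrable (fun u : ℝ =>
      (∫ ω, Complex.exp (((1 / 2 : ℂ) + (u : ℂ) * Complex.I) * (P ω : ℂ)) ∂ℙ) /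
        ((1 / 4 + u ^ 2 : ℝ) : ℂ)) ∧
    ((∫ ω, max (Real.exp (P ω) - 1) 0 ∂ℙ : ℝ) : ℂ)
      = ((∫ ω, Real.exp (P ω) ∂ℙ : ℝ) : ℂ)
        - (1 / (2 * (Real.pi : ℂ))) *
          ∫ u : ℝ, (∫ ω, Complex.exp (((1 / 2 : ℂ) + (u : ℂ) * Complex.I) * (P ω : ℂ)) ∂ℙ) /
            ((1 / 4 + u ^ 2 : ℝ) : ℂ) :=
  carr_madan_representation_general ℙ P hint
end
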